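/- Let (m_1,...,m_n) ∈ M̂ (i.e., for every k there is a set I_k containing k with r+1 − Σ_{i∈I_k} m_i = d_{I_k} + 1, and r+1−Σ_{i∈I}m_i > d_I for all I). Denote by I_{m_h} the unique maximal element of S_{m_h} = {I ∋ h : r+1 − Σ_{i∈I}m_i = d_I + 1}. Then: (i) I_{m_h} = I_{m_j} whenever j ∈ I_{m_h}; (ii) I_{m_h} ∩ I_{m_j} = ∅ whenever j ∉ I_{m_h}. In particular [n] decomposes as a disjoint union of the sets I_{m_h}. -/

import Mathlib

/-!
The function `f I = ∑_{i ∈ I} mᵢ + dim (⋂_{i ∈ I} Vᵢ)` is supermodular, by the Grassmann formula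
and `V_I + V_J ⊆ V_{I ∩ J}`. Since `f < r + 1` on nonempty sets, two sets `I`, `J` on which `f`
attains the value `r` and which meet force `f (I ∪ J) = f (I ∩ J) = r`. Hence the sets of
`S_{m_h}` are closed under unions of meeting pairs, so the greatest elements `I_{m_h}` and
`I_{m_j}` coincide as soon as they meet.
-/

open Module

section

variable {ι : Type*} [DecidableEq ι]

theorem finrank_biInf_add_finrank_biInf_le {K V : Type*} [Field K] [AddCommGroup V] [Module K V]
    [FiniteDimensional K V] (Vs : ι → Submodule K V) (I J : Finset ι) :
    finrank K ↥(⨅ i ∈ I, Vs i) + finrank K ↥(⨅ i ∈ J, Vs i) ≤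
      finrank K ↥(⨅ i ∈ I ∪ J, Vs i) + finrank K ↥(⨅ i ∈ I ∩ J, Vs i) := by
  have h_union : ⨅ i ∈ I ∪ J, Vs i = (⨅ i ∈ I, Vs i) ⊓ ⨅ i ∈ J, Vs i := by
    simp only [← Finset.inf_eq_iInf, Finset.inf_union]
  have h_sup : (⨅ i ∈ I, Vs i) ⊔ (⨅ i ∈ J, Vs i) ≤ ⨅ i ∈ I ∩ J, Vs i :=
    sup_le (biInf_mono fun _ hi => Finset.mem_of_mem_inter_left hi)
      (biInf_mono fun _ hi => Finset.mem_of_mem_inter_right hi)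
  rw [h_union, ← Submodule.finrank_sup_add_finrank_inf_eq, add_comm]
  exact Nat.add_le_add_left (Submodule.finrank_mono h_sup) _

theorem apply_union_eq_of_supermodular {f : Finset ι → ℕ} {c : ℕ}
    (hf : ∀ I J, f I + f J ≤ f (I ∪ J) + f (I ∩ J))
    (hc : ∀ I : Finset ι, I.Nonempty → f I ≤ c)
    {I J : Finset ι} (hIJ : (I ∩ J).Nonempty) (hI : f I = c) (hJ : f J = c) :
    f (I ∪ J) = c := by
  have h_union := hc (I ∪ J) (hIJ.mono (Finset.inter_subset_left.trans Finset.subset_union_left))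
  have := hf I J
  have := hc (I ∩ J) hIJ
  omega

theorem greatest_eq_of_inter_nonempty {P : Finset ι → Prop}
    (hP : ∀ I J, (I ∩ J).Nonempty → P I → P J → P (I ∪ J))
    {G : ι → Finset ι} (hmem : ∀ h, h ∈ G h) (hG : ∀ h, P (G h))
    (hmax : ∀ h J, h ∈ J → P J → J ⊆ G h) {h j : ι} (hhj : (G h ∩ G j).Nonempty) :
    G h = G j := by
  have h_union := hP _ _ hhj (hG h) (hG j)
  have h_sub_h := hmax h _ (Finset.mem_union_left _ (hmem h)) h_union
  have h_sub_j := hmax j _ (Finset.mem_union_right _ (hmem j)) h_union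
  exact (Finset.subset_union_left.trans h_sub_j).antisymm (Finset.subset_union_right.trans h_sub_h)

end

theorem Im_partition_general
    {K V : Type*} [Field K] [AddCommGroup V] [Module K V] [FiniteDimensional K V]
    (r n : ℕ) (Vs : Fin n → Submodule K V)
    (m : Fin n → ℕ)
    (hm : ∀ I : Finset (Fin n), I.Nonempty →
      ∑ i ∈ I, m i + finrank K ↥(⨅ i ∈ I, Vs i) < r + 1)
    (Im : Fin n → Finset (Fin n))
    (hmem : ∀ h, h ∈ Im h)
    (heq : ∀ h, ∑ i ∈ Im h, m i + finrank K ↥(⨅ i ∈ Im h, Vs i) + 1 = r + 1)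
    (hmax : ∀ h, ∀ J : Finset (Fin n), h ∈ J →
      ∑ i ∈ J, m i + finrank K ↥(⨅ i ∈ J, Vs i) + 1 = r + 1 → J ⊆ Im h) :
    (∀ h j, j ∈ Im h → Im h = Im j) ∧
    (∀ h j, j ∉ Im h → Im h ∩ Im j = ∅) := by
  set f : Finset (Fin n) → ℕ := fun I => ∑ i ∈ I, m i + finrank K ↥(⨅ i ∈ I, Vs i)
  have hf : ∀ I J, f I + f J ≤ f (I ∪ J) + f (I ∩ J) := fun I J => by
    simp only [f]
    have := finrank_biInf_add_finrank_biInf_le Vs I J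
    have := Finset.sum_union_inter (s₁ := I) (s₂ := J) (f := m)
    omega
  have key : ∀ h j, (Im h ∩ Im j).Nonempty → Im h = Im j := fun h j =>
    greatest_eq_of_inter_nonempty (P := fun J => f J + 1 = r + 1)
      (fun I J hIJ hI hJ => by
        have := apply_union_eq_of_supermodular (c := r) hf (fun I hI => Nat.le_of_lt_succ (hm I hI))
          hIJ (by omega) (by omega)
        omega)
      hmem heq hmax
  refine ⟨fun h j hj => key h j ⟨j, Finset.mem_inter.mpr ⟨hj, hmem j⟩⟩, fun h j hj => ?_⟩
  by_contra hne
  exact hj (key h j (Finset.nonempty_iff_ne_empty.mpr hne) ▸ hmem j)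

/-- let `(m₁,…,m_n)` satisfy `r+1 - ∑_{i∈I} mᵢ > d_I` for all nonempty `I`, and
suppose each index `h` lies in some `I` with equality `r+1 - ∑_{i∈I} mᵢ = d_I + 1`.  Let
`Im h` be the (unique) maximal — indeed greatest — element of
`S_h = {I ∋ h : r+1 - ∑_{i∈I} mᵢ = d_I + 1}`.  Then (i) `Im h = Im j` whenever `j ∈ Im h`,
and (ii) `Im h ∩ Im j = ∅` whenever `j ∉ Im h`; so `[n]` is the disjoint union of the `Im h`. -/
theorem Im_partition
    {K V : Type*} [Field K] [AddCommGroup V] [Module K V] [FiniteDimensional K V]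
    (r n : ℕ) (hV : finrank K V = r + 1) (Vs : Fin n → Submodule K V)
    (m : Fin n → ℕ)
    (hm : ∀ I : Finset (Fin n), I.Nonempty →
      ∑ i ∈ I, m i + finrank K ↥(⨅ i ∈ I, Vs i) < r + 1)
    (Im : Fin n → Finset (Fin n))
    (hmem : ∀ h, h ∈ Im h)
    (heq : ∀ h, ∑ i ∈ Im h, m i + finrank K ↥(⨅ i ∈ Im h, Vs i) + 1 = r + 1)
    (hmax : ∀ h, ∀ J : Finset (Fin n), h ∈ J →
      ∑ i ∈ J, m i + finrank K ↥(⨅ i ∈ J, Vs i) + 1 = r + 1 → J ⊆ Im h) :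
    (∀ h j, j ∈ Im h → Im h = Im j) ∧
    (∀ h j, j ∉ Im h → Im h ∩ Im j = ∅) :=
  Im_partition_general r n Vs m hm Im hmem heq hmax
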